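/- Let Φ(u,r,t;v,ρ) := (u−v)² − (b/2)²(4r²ρ² − (r²+ρ²−t²)²) and let Proj(Φ) := det [∂_{(u,r,t)}Φ, ∂²_{(u,r,t),v}Φ, ∂²_{(u,r,t),ρ}Φ] be the 3×3 determinant whose columns are the gradient of Φ in (u,r,t) and its v- and ρ-derivatives. Then for all points with Φ(u,r,t;v,ρ) = 0, Proj(Φ)(u,r,t;v,ρ) = −8b⁴·r·t·ρ·(r² − t²). -/

import Mathlib

/-- The defining function Φ(u,r,t;v,ρ) = (u−v)² − (b/2)²(4r²ρ² − (r²+ρ²−t²)²). -/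
noncomputable def Phi (b u r t v ρ : ℝ) : ℝ :=
  (u - v) ^ 2 - (b / 2) ^ 2 * (4 * r ^ 2 * ρ ^ 2 - (r ^ 2 + ρ ^ 2 - t ^ 2) ^ 2)

/-- ∂_u Φ -/
noncomputable def Pu (b u r t v ρ : ℝ) : ℝ := deriv (fun u' => Phi b u' r t v ρ) u
/-- ∂_r Φ -/
noncomputable def Pr (b u r t v ρ : ℝ) : ℝ := deriv (fun r' => Phi b u r' t v ρ) r
/-- ∂_t Φ -/
noncomputable def Pt (b u r t v ρ : ℝ) : ℝ := deriv (fun t' => Phi b u r t' v ρ) t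
/-- ∂_v Φ -/
noncomputable def Pv (b u r t v ρ : ℝ) : ℝ := deriv (fun v' => Phi b u r t v' ρ) v
/-- ∂_ρ Φ -/
noncomputable def Pp (b u r t v ρ : ℝ) : ℝ := deriv (fun ρ' => Phi b u r t v ρ') ρ
/-- ∂²_{uv} Φ -/
noncomputable def Puv (b u r t v ρ : ℝ) : ℝ := deriv (fun u' => Pv b u' r t v ρ) u
/-- ∂²_{uρ} Φ -/
noncomputable def Pup (b u r t v ρ : ℝ) : ℝ := deriv (fun u' => Pp b u' r t v ρ) u
/-- ∂²_{rv} Φ -/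
noncomputable def Prv (b u r t v ρ : ℝ) : ℝ := deriv (fun r' => Pv b u r' t v ρ) r
/-- ∂²_{rρ} Φ -/
noncomputable def Prp (b u r t v ρ : ℝ) : ℝ := deriv (fun r' => Pp b u r' t v ρ) r
/-- ∂²_{tv} Φ -/
noncomputable def Ptv (b u r t v ρ : ℝ) : ℝ := deriv (fun t' => Pv b u r t' v ρ) t
/-- ∂²_{tρ} Φ -/
noncomputable def Ptp (b u r t v ρ : ℝ) : ℝ := deriv (fun t' => Pp b u r t' v ρ) t
/-- ∂²_{vv} Φ -/
noncomputable def Pvv (b u r t v ρ : ℝ) : ℝ := deriv (fun v' => Pv b u r t v' ρ) v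
/-- ∂²_{vρ} Φ -/
noncomputable def Pvp (b u r t v ρ : ℝ) : ℝ := deriv (fun v' => Pp b u r t v' ρ) v
/-- ∂²_{ρv} Φ -/
noncomputable def Ppv (b u r t v ρ : ℝ) : ℝ := deriv (fun ρ' => Pv b u r t v ρ') ρ
/-- ∂²_{ρρ} Φ -/
noncomputable def Ppp (b u r t v ρ : ℝ) : ℝ := deriv (fun ρ' => Pp b u r t v ρ') ρ

/-- ∂_v applied to the (u,r,t)-gradient of Φ (for the projection determinant). -/
noncomputable def Pvu (b u r t v ρ : ℝ) : ℝ := deriv (fun v' => Pu b u r t v' ρ) v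
noncomputable def Pvr (b u r t v ρ : ℝ) : ℝ := deriv (fun v' => Pr b u r t v' ρ) v
noncomputable def Pvt (b u r t v ρ : ℝ) : ℝ := deriv (fun v' => Pt b u r t v' ρ) v
/-- ∂_ρ applied to the (u,r,t)-gradient of Φ. -/
noncomputable def Ppu (b u r t v ρ : ℝ) : ℝ := deriv (fun ρ' => Pu b u r t v ρ') ρ
noncomputable def Ppr (b u r t v ρ : ℝ) : ℝ := deriv (fun ρ' => Pr b u r t v ρ') ρ
noncomputable def Ppt (b u r t v ρ : ℝ) : ℝ := deriv (fun ρ' => Pt b u r t v ρ') ρ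

/-! Only the `u`-component of the gradient depends on `v`, and only its `r`- and `t`-components
depend on `ρ`. Expanding along the `v`-column `(-2, 0, 0)` therefore leaves
`2 (∂_rΦ ∂²_{tρ}Φ - ∂_tΦ ∂²_{rρ}Φ)`, which is computed directly. -/

section PartialDerivatives

variable (b u r t v ρ : ℝ)

theorem Pu_eq : Pu b u r t v ρ = 2 * (u - v) := by
  simp (disch := fun_prop) [Pu, Phi]

theorem Pr_eq : Pr b u r t v ρ = -b ^ 2 * r * (t ^ 2 - r ^ 2 + ρ ^ 2) := by
  simp (disch := fun_prop) [Pr, Phi]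
  ring

theorem Pt_eq : Pt b u r t v ρ = b ^ 2 * t * (t ^ 2 - r ^ 2 - ρ ^ 2) := by
  simp (disch := fun_prop) [Pt, Phi]
  ring

theorem Pvu_eq : Pvu b u r t v ρ = -2 := by
  simp (disch := fun_prop) [Pvu, Pu_eq]

theorem Pvr_eq : Pvr b u r t v ρ = 0 := by
  simp [Pvr, Pr_eq]

theorem Pvt_eq : Pvt b u r t v ρ = 0 := by
  simp [Pvt, Pt_eq]

theorem Ppu_eq : Ppu b u r t v ρ = 0 := by
  simp [Ppu, Pu_eq]

theorem Ppr_eq : Ppr b u r t v ρ = -2 * b ^ 2 * r * ρ := by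
  simp (disch := fun_prop) [Ppr, Pr_eq]
  ring

theorem Ppt_eq : Ppt b u r t v ρ = -2 * b ^ 2 * t * ρ := by
  simp (disch := fun_prop) [Ppt, Pt_eq]
  ring

end PartialDerivatives

theorem statement15_general (b u r t v ρ : ℝ) :
    (Matrix.transpose !![Pu b u r t v ρ, Pr b u r t v ρ, Pt b u r t v ρ;
                         Pvu b u r t v ρ, Pvr b u r t v ρ, Pvt b u r t v ρ;
                         Ppu b u r t v ρ, Ppr b u r t v ρ, Ppt b u r t v ρ]).det
      = -8 * b ^ 4 * r * t * ρ * (r ^ 2 - t ^ 2) := by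
  simp [Matrix.det_fin_three, Pu_eq, Pr_eq, Pt_eq, Pvu_eq, Pvr_eq, Pvt_eq, Ppu_eq, Ppr_eq, Ppt_eq]
  ring

/-- On the zero set of Φ, the projection determinant
Proj(Φ) = det [∂_{(u,r,t)}Φ, ∂²_{(u,r,t),v}Φ, ∂²_{(u,r,t),ρ}Φ] equals −8b⁴rtρ(r²−t²). -/
theorem statement15 (b u r t v ρ : ℝ) (hΦ : Phi b u r t v ρ = 0) :
    (Matrix.transpose !![Pu b u r t v ρ, Pr b u r t v ρ, Pt b u r t v ρ;
                         Pvu b u r t v ρ, Pvr b u r t v ρ, Pvt b u r t v ρ;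
                         Ppu b u r t v ρ, Ppr b u r t v ρ, Ppt b u r t v ρ]).det
      = -8 * b ^ 4 * r * t * ρ * (r ^ 2 - t ^ 2) :=
  statement15_general b u r t v ρ
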